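/- Let H be a countably infinite index set with an increasing sequence of finite subsets H_1 ⊂ H_2 ⊂ ⋯ with ⋃_L H_L = H, and let D, G be infinite complex matrices indexed by H satisfying conditions (D) and (G'). Then the infinite Q-system ∏_{j∈H} Q_j(w)^{D_{ij}} + w_i ∏_{j∈H} Q_j(w)^{G_{ij}} = 1 (i ∈ H) has a unique canonical solution, and it is given by Q_i(w) = ∏_{j∈H} (Q'_j(w))^{(D^{-1})_{ij}}, where (Q'_i(w))_{i∈H} is the unique solution with unit constant terms of the standard infinite Q-system Q'_i(w) + w_i ∏_{j∈H} (Q'_j(w))^{G'_{ij}} = 1 with G' = GD^{-1}. -/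

import Mathlib

/-!
Write `f^α = ∑_k binom(α, k) (f - 1)^k`. Every coefficient of `f^α` is a polynomial in `α`,
so the power laws for complex exponents follow from those for natural ones.

If `Q'_j ≡ 1 mod w_j` (`X j ∣ Q'_j - 1`), the factor `(Q'_j)^c` only affects coefficients of
monomials containing `w_j`, so `∏_j (Q'_j)^{c_j}` converges for every `c`; raising such products
to the powers `a_j` and multiplying over `j` gives `∏_k (Q'_k)^{(a c)_k}` as soon as the
row-times-matrix product `a c` is finitely defined. With `Q_i = ∏_j (Q'_j)^{(D⁻¹)_{ij}}` this turns
the standard system for `G' = G D⁻¹` into the given one. Conversely, for a canonical solution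
`Q` put `P_j = ∏_k Q_k^{D_{jk}} = 1 - w_j ∏_k Q_k^{G_{jk}}`; the inner products are
`P_j^{(D⁻¹)_{ij}}`, so `Q_i = ∏_j P_j^{(D⁻¹)_{ij}}` and `P` solves the standard system. The
latter, `Q'_i = 1 - w_i ∏_j (Q'_j)^{G'_{ij}}`, fixes the coefficients of degree `d + 1` in terms
of those of degree `≤ d`, so it has exactly one solution.
-/

noncomputable def binomC (a : ℂ) (b : ℕ) : ℂ :=
  (∏ j ∈ Finset.range b, (a - (j : ℂ))) / (Nat.factorial b : ℂ)

noncomputable def cpow {σ : Type*} (f : MvPowerSeries σ ℂ) (α : ℂ) : MvPowerSeries σ ℂ :=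
  fun N => ∑ k ∈ Finset.range (N.sum (fun _ e => e) + 1),
    binomC α k * MvPowerSeries.coeff N ((f - 1) ^ k)

/-- `HasProdPS f P`: the (possibly infinite) product of the family `f` converges to `P`
in the projective-limit topology on formal power series, i.e. every coefficient of the
finite partial products eventually stabilizes at the corresponding coefficient of `P`,
irrespective of the order of the product. -/
def HasProdPS {ι σ : Type*} (f : ι → MvPowerSeries σ ℂ) (P : MvPowerSeries σ ℂ) : Prop :=
  ∀ N : σ →₀ ℕ, ∃ s : Finset ι, ∀ t : Finset ι, s ⊆ t →
    MvPowerSeries.coeff N (∏ j ∈ t, f j) = MvPowerSeries.coeff N P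

/-- A family `(Q_i)` with unit constant terms is a solution of the standard infinite
`Q`-system `Q_i + w_i ∏_j Q_j^{G_{ij}} = 1` (the infinite products being required to
converge). -/
def InfStdSys {H : Type*} (G : H → H → ℂ) (Q : H → MvPowerSeries H ℂ) : Prop :=
  (∀ i, MvPowerSeries.constantCoeff (Q i) = 1) ∧
  ∀ i, ∃ P, HasProdPS (fun j => cpow (Q j) (G i j)) P ∧
    Q i + MvPowerSeries.X i * P = 1

/-- A family `(Q_i)` with unit constant terms is a solution of the infinite `Q`-system
`∏_j Q_j^{D_{ij}} + w_i ∏_j Q_j^{G_{ij}} = 1` (the infinite products being required to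
converge). -/
def InfSys {H : Type*} (D G : H → H → ℂ) (Q : H → MvPowerSeries H ℂ) : Prop :=
  (∀ i, MvPowerSeries.constantCoeff (Q i) = 1) ∧
  ∀ i, ∃ P₁ P₂, HasProdPS (fun j => cpow (Q j) (D i j)) P₁ ∧
    HasProdPS (fun j => cpow (Q j) (G i j)) P₂ ∧
    P₁ + MvPowerSeries.X i * P₂ = 1

/-- The inversion property of a solution: for each `i`, the iterated infinite product
`∏_j (∏_k Q_k^{(D⁻¹)_{ij} D_{jk}})` exists and equals `Q_i`. -/
def IsCanonicalPS {ι σ : Type*} (Dinv D : ι → ι → ℂ) (Q : ι → MvPowerSeries σ ℂ) : Prop :=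
  ∀ i, ∃ inner : ι → MvPowerSeries σ ℂ,
    (∀ j, HasProdPS (fun k => cpow (Q k) (Dinv i j * D j k)) (inner j)) ∧
    HasProdPS inner (Q i)

/-- Condition (D): `Dinv` is a two-sided inverse of the infinite matrix `D`, all the sums
involved having finitely many nonzero terms. -/
def InvPair {H : Type*} [DecidableEq H] (D Dinv : H → H → ℂ) : Prop :=
  (∀ i k, ({j | D i j * Dinv j k ≠ 0} : Set H).Finite ∧
    ∑ᶠ j, D i j * Dinv j k = if i = k then (1 : ℂ) else 0) ∧
  (∀ i k, ({j | Dinv i j * D j k ≠ 0} : Set H).Finite ∧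
    ∑ᶠ j, Dinv i j * D j k = if i = k then (1 : ℂ) else 0)

/-- Condition (G'): the matrix product `G' = G · Dinv` is well-defined, i.e. for each
`i, k` all but finitely many `G_{ij} (D⁻¹)_{jk}` vanish, and its value is `G'`. -/
def MulDef {H : Type*} (G Dinv G' : H → H → ℂ) : Prop :=
  ∀ i k, ({j | G i j * Dinv j k ≠ 0} : Set H).Finite ∧
    ∑ᶠ j, G i j * Dinv j k = G' i k

/-- The projection `p_L : ℂ[[w]] → ℂ[[w_L]]` (realized as a self-map of `ℂ[[w]]`),
sending `w_i ↦ w_i` for `i ∈ s` and `w_i ↦ 0` otherwise. -/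
noncomputable def projL {H : Type*} [DecidableEq H] (s : Finset H)
    (f : MvPowerSeries H ℂ) : MvPowerSeries H ℂ :=
  fun N => if N.support ⊆ s then MvPowerSeries.coeff N f else 0

open MvPowerSeries Finset

section Cpow

variable {σ : Type*}

lemma coeff_pow_eq_zero_of_degree_lt {R : Type*} [CommSemiring R] {u : MvPowerSeries σ R}
    (hu : constantCoeff u = 0) {k : ℕ} {N : σ →₀ ℕ} (hN : N.degree < k) :
    coeff N (u ^ k) = 0 :=
  coeff_of_lt_order ((Nat.cast_lt.2 hN).trans_le (le_order_pow_of_constantCoeff_eq_zero k hu))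

lemma coeff_cpow (f : MvPowerSeries σ ℂ) (α : ℂ) (N : σ →₀ ℕ) :
    coeff N (cpow f α) = ∑ k ∈ range (N.degree + 1), binomC α k * coeff N ((f - 1) ^ k) :=
  rfl

lemma coeff_cpow_eq_sum_range {f : MvPowerSeries σ ℂ} (hf : constantCoeff f = 1) (α : ℂ)
    {N : σ →₀ ℕ} {m : ℕ} (hm : N.degree < m) :
    coeff N (cpow f α) = ∑ k ∈ range m, binomC α k * coeff N ((f - 1) ^ k) := by
  rw [coeff_cpow]
  refine sum_subset (range_subset_range.2 hm) fun k hk hk' => ?_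
  rw [coeff_pow_eq_zero_of_degree_lt (by simp [hf]) (by simpa using hk'), mul_zero]

lemma binomC_eq_eval_descPochhammer (α : ℂ) (k : ℕ) :
    binomC α k = (descPochhammer ℂ k).eval α / k.factorial := by
  rw [binomC, descPochhammer_eval_eq_prod_range]

lemma binomC_natCast (n k : ℕ) : binomC n k = n.choose k := by
  rw [binomC_eq_eval_descPochhammer, descPochhammer_eval_eq_descFactorial,
    Nat.descFactorial_eq_factorial_mul_choose, Nat.cast_mul,
    mul_div_cancel_left₀ _ (Nat.cast_ne_zero.2 k.factorial_ne_zero)]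

lemma cpow_natCast {f : MvPowerSeries σ ℂ} (hf : constantCoeff f = 1) (n : ℕ) :
    cpow f n = f ^ n := by
  ext N
  have hlt : N.degree < n + 1 + N.degree := by omega
  have hpow : f ^ n = ∑ k ∈ range (n + 1), (n.choose k : ℂ) • (f - 1) ^ k := by
    conv_lhs => rw [← sub_add_cancel f 1, add_pow]
    simp [mul_comm, Nat.cast_smul_eq_nsmul]
  rw [coeff_cpow_eq_sum_range hf _ hlt, hpow, map_sum]
  refine ((sum_subset (range_subset_range.2 (by omega)) fun k _ hk => ?_).trans
    (sum_congr rfl fun k _ => ?_)).symm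
  · simp [Nat.choose_eq_zero_of_lt (show n < k by simpa using hk)]
  · simp [binomC_natCast]

lemma constantCoeff_cpow (f : MvPowerSeries σ ℂ) (α : ℂ) : constantCoeff (cpow f α) = 1 := by
  rw [← coeff_zero_eq_constantCoeff_apply, coeff_cpow]
  simp [binomC]

end Cpow

section PolynomialFns

open Polynomial

noncomputable def polynomialFns : Subring (ℂ → ℂ) :=
  (RingHom.pi fun x : ℂ => Polynomial.evalRingHom x).range

lemma mem_polynomialFns {F : ℂ → ℂ} : F ∈ polynomialFns ↔ ∃ p : ℂ[X], ∀ x, p.eval x = F x := by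
  simp [polynomialFns, funext_iff, RingHom.pi_apply]

lemma const_mem_polynomialFns (c : ℂ) : (fun _ => c) ∈ polynomialFns :=
  mem_polynomialFns.2 ⟨C c, fun _ => eval_C⟩

lemma id_mem_polynomialFns : (fun x => x) ∈ polynomialFns :=
  mem_polynomialFns.2 ⟨X, fun _ => eval_X⟩

lemma comp_mem_polynomialFns {F φ : ℂ → ℂ} (hF : F ∈ polynomialFns) (hφ : φ ∈ polynomialFns) :
    (fun x => F (φ x)) ∈ polynomialFns := by
  obtain ⟨p, hp⟩ := mem_polynomialFns.1 hF
  obtain ⟨q, hq⟩ := mem_polynomialFns.1 hφ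
  exact mem_polynomialFns.2 ⟨p.comp q, fun x => by rw [eval_comp, hq, hp]⟩

lemma eq_of_mem_polynomialFns {F G : ℂ → ℂ} (hF : F ∈ polynomialFns) (hG : G ∈ polynomialFns)
    (h : ∀ n : ℕ, F n = G n) : F = G := by
  obtain ⟨p, hp⟩ := mem_polynomialFns.1 hF
  obtain ⟨q, hq⟩ := mem_polynomialFns.1 hG
  have hpq : p = q := eq_of_infinite_eval_eq p q <|
    (Set.infinite_range_of_injective Nat.cast_injective).mono <| by
      rintro _ ⟨n, rfl⟩
      simp [hp, hq, h]
  funext x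
  rw [← hp, ← hq, hpq]

end PolynomialFns

section PolynomialCoeffs

variable {σ : Type*}

def HasPolynomialCoeffs (F : ℂ → MvPowerSeries σ ℂ) : Prop :=
  ∀ N, (fun α => coeff N (F α)) ∈ polynomialFns

lemma hasPolynomialCoeffs_const (f : MvPowerSeries σ ℂ) : HasPolynomialCoeffs fun _ : ℂ => f :=
  fun N => const_mem_polynomialFns (coeff N f)

lemma hasPolynomialCoeffs_cpow (f : MvPowerSeries σ ℂ) : HasPolynomialCoeffs (cpow f) := by
  intro N
  refine mem_polynomialFns.2 ⟨∑ k ∈ range (N.degree + 1),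
    Polynomial.C (coeff N ((f - 1) ^ k) / k.factorial : ℂ) * descPochhammer ℂ k, fun α => ?_⟩
  simp only [Polynomial.eval_finsetSum, Polynomial.eval_mul, Polynomial.eval_C, coeff_cpow,
    binomC_eq_eval_descPochhammer]
  exact sum_congr rfl fun k _ => by ring

lemma HasPolynomialCoeffs.mul {F G : ℂ → MvPowerSeries σ ℂ} (hF : HasPolynomialCoeffs F)
    (hG : HasPolynomialCoeffs G) : HasPolynomialCoeffs fun α => F α * G α := by
  classical
  intro N
  have h : (fun α => coeff N (F α * G α))
      = ∑ p ∈ antidiagonal N, (fun α => coeff p.1 (F α)) * fun α => coeff p.2 (G α) := by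
    ext α
    simp [MvPowerSeries.coeff_mul]
  exact h ▸ sum_mem fun p _ => mul_mem (hF p.1) (hG p.2)

lemma HasPolynomialCoeffs.comp {F : ℂ → MvPowerSeries σ ℂ} (hF : HasPolynomialCoeffs F)
    {φ : ℂ → ℂ} (hφ : φ ∈ polynomialFns) : HasPolynomialCoeffs fun α => F (φ α) :=
  fun N => comp_mem_polynomialFns (hF N) hφ

lemma HasPolynomialCoeffs.eq_of_natCast {F G : ℂ → MvPowerSeries σ ℂ}
    (hF : HasPolynomialCoeffs F) (hG : HasPolynomialCoeffs G) (h : ∀ n : ℕ, F n = G n) :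
    F = G := by
  funext α
  ext N
  exact congrFun (eq_of_mem_polynomialFns (hF N) (hG N) fun n => by rw [h]) α

end PolynomialCoeffs

section CpowAlgebra

variable {σ : Type*}

lemma cpow_zero {f : MvPowerSeries σ ℂ} (hf : constantCoeff f = 1) : cpow f 0 = 1 := by
  simpa using cpow_natCast hf 0

lemma cpow_one {f : MvPowerSeries σ ℂ} (hf : constantCoeff f = 1) : cpow f 1 = f := by
  simpa using cpow_natCast hf 1

lemma one_cpow (α : ℂ) : cpow (1 : MvPowerSeries σ ℂ) α = 1 :=
  congrFun ((hasPolynomialCoeffs_cpow 1).eq_of_natCast (hasPolynomialCoeffs_const 1)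
    fun n => by rw [cpow_natCast (map_one _), one_pow]) α

lemma cpow_add {f : MvPowerSeries σ ℂ} (hf : constantCoeff f = 1) (α β : ℂ) :
    cpow f (α + β) = cpow f α * cpow f β := by
  -- both sides are polynomial in each exponent: settle natural `β` first, then all `β`
  have hnat (n : ℕ) (γ : ℂ) : cpow f (γ + n) = cpow f γ * cpow f n :=
    congrFun (((hasPolynomialCoeffs_cpow f).comp (φ := fun γ => γ + n)
      (add_mem id_mem_polynomialFns (const_mem_polynomialFns n))).eq_of_natCast
      ((hasPolynomialCoeffs_cpow f).mul (hasPolynomialCoeffs_const _)) fun m => by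
        simp only [← Nat.cast_add, cpow_natCast hf, pow_add]) γ
  exact congrFun (((hasPolynomialCoeffs_cpow f).comp (φ := fun β => α + β)
    (add_mem (const_mem_polynomialFns α) id_mem_polynomialFns)).eq_of_natCast
    ((hasPolynomialCoeffs_const _).mul (hasPolynomialCoeffs_cpow f)) (hnat · α)) β

lemma cpow_mul_natCast {f : MvPowerSeries σ ℂ} (hf : constantCoeff f = 1) (α : ℂ) (n : ℕ) :
    cpow f (α * n) = cpow f α ^ n := by
  induction n with
  | zero => simp [cpow_zero hf]
  | succ n ih => rw [Nat.cast_succ, mul_add_one, cpow_add hf, ih, pow_succ]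

lemma cpow_cpow {f : MvPowerSeries σ ℂ} (hf : constantCoeff f = 1) (α β : ℂ) :
    cpow (cpow f α) β = cpow f (α * β) :=
  congrFun ((hasPolynomialCoeffs_cpow _).eq_of_natCast
    ((hasPolynomialCoeffs_cpow f).comp (φ := fun β => α * β)
      (mul_mem (const_mem_polynomialFns α) id_mem_polynomialFns)) fun n => by
      rw [cpow_natCast (constantCoeff_cpow f α), cpow_mul_natCast hf]) β

lemma mul_cpow {f g : MvPowerSeries σ ℂ} (hf : constantCoeff f = 1) (hg : constantCoeff g = 1)
    (α : ℂ) : cpow (f * g) α = cpow f α * cpow g α :=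
  congrFun ((hasPolynomialCoeffs_cpow _).eq_of_natCast
    ((hasPolynomialCoeffs_cpow f).mul (hasPolynomialCoeffs_cpow g)) fun n => by
      rw [cpow_natCast (by simp [hf, hg]), cpow_natCast hf, cpow_natCast hg, mul_pow]) α

lemma prod_cpow {ι : Type*} (s : Finset ι) {g : ι → MvPowerSeries σ ℂ}
    (hg : ∀ i, constantCoeff (g i) = 1) (α : ℂ) :
    cpow (∏ i ∈ s, g i) α = ∏ i ∈ s, cpow (g i) α := by
  classical
  induction s using Finset.induction_on with
  | empty => simp [one_cpow]
  | insert a s ha ih =>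
    rw [prod_insert ha, prod_insert ha, mul_cpow (hg a) (by simp [hg]), ih]

lemma cpow_sum {ι : Type*} (s : Finset ι) {f : MvPowerSeries σ ℂ} (hf : constantCoeff f = 1)
    (a : ι → ℂ) : cpow f (∑ i ∈ s, a i) = ∏ i ∈ s, cpow f (a i) := by
  classical
  induction s using Finset.induction_on with
  | empty => simp [cpow_zero hf]
  | insert b s hb ih => rw [sum_insert hb, prod_insert hb, cpow_add hf, ih]

end CpowAlgebra

section CoeffsEqOn

variable {σ R : Type*}

def CoeffsEqOn [Semiring R] (S : Set (σ →₀ ℕ)) (f g : MvPowerSeries σ R) : Prop :=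
  ∀ N ∈ S, coeff N f = coeff N g

namespace CoeffsEqOn

variable [CommRing R] {S T : Set (σ →₀ ℕ)} {f f' g g' : MvPowerSeries σ R}

lemma mono (h : CoeffsEqOn T f g) (hST : S ⊆ T) : CoeffsEqOn S f g :=
  fun N hN => h N (hST hN)

lemma trans (hfg : CoeffsEqOn S f g) (hgh : CoeffsEqOn S g g') : CoeffsEqOn S f g' :=
  fun N hN => (hfg N hN).trans (hgh N hN)

lemma sub (hf : CoeffsEqOn S f f') (hg : CoeffsEqOn S g g') : CoeffsEqOn S (f - g) (f' - g') :=
  fun N hN => by rw [map_sub, map_sub, hf N hN, hg N hN]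

lemma mul (hS : IsLowerSet S) (hf : CoeffsEqOn S f f') (hg : CoeffsEqOn S g g') :
    CoeffsEqOn S (f * g) (f' * g') := by
  classical
  intro N hN
  rw [coeff_mul, coeff_mul]
  refine sum_congr rfl fun p hp => ?_
  rw [hf p.1 (hS (HasAntidiagonal.antidiagonal.fst_le hp) hN),
    hg p.2 (hS (HasAntidiagonal.antidiagonal.snd_le hp) hN)]

lemma pow (hS : IsLowerSet S) (hf : CoeffsEqOn S f f') (k : ℕ) :
    CoeffsEqOn S (f ^ k) (f' ^ k) := by
  induction k with
  | zero => exact fun _ _ => rfl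
  | succ k ih => simpa only [pow_succ] using ih.mul hS hf

lemma prod (hS : IsLowerSet S) {ι : Type*} (s : Finset ι) {F G : ι → MvPowerSeries σ R}
    (h : ∀ i ∈ s, CoeffsEqOn S (F i) (G i)) : CoeffsEqOn S (∏ i ∈ s, F i) (∏ i ∈ s, G i) := by
  classical
  induction s using Finset.induction_on with
  | empty => exact fun _ _ => rfl
  | insert a s ha ih =>
    simp only [prod_insert ha]
    exact (h a (mem_insert_self a s)).mul hS (ih fun i hi => h i (mem_insert_of_mem hi))

lemma cpow (hS : IsLowerSet S) {f g : MvPowerSeries σ ℂ} (h : CoeffsEqOn S f g) (α : ℂ) :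
    CoeffsEqOn S (_root_.cpow f α) (_root_.cpow g α) := by
  intro N hN
  simp only [coeff_cpow]
  exact sum_congr rfl fun k _ => by
    rw [((h.sub fun _ _ => rfl).pow hS k) N hN]

end CoeffsEqOn

end CoeffsEqOn

section DvdSubOne

variable {σ R : Type*} [CommRing R]

lemma constantCoeff_eq_one_of_X_dvd_sub_one {i : σ} {f : MvPowerSeries σ R} (h : X i ∣ f - 1) :
    constantCoeff f = 1 := by
  have := X_dvd_iff.1 h 0 rfl
  rwa [coeff_zero_eq_constantCoeff_apply, map_sub, map_one, sub_eq_zero] at this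

lemma X_dvd_sub_one_of_add_X_mul_eq_one {i : σ} {f g : MvPowerSeries σ R}
    (h : f + X i * g = 1) : X i ∣ f - 1 :=
  ⟨-g, by rw [← h]; ring⟩

lemma coeff_mul_eq_of_X_dvd_sub_one {i : σ} {g : MvPowerSeries σ R} (hg : X i ∣ g - 1)
    {N : σ →₀ ℕ} (hN : N i = 0) (A : MvPowerSeries σ R) : coeff N (A * g) = coeff N A := by
  have := X_dvd_iff.1 (dvd_mul_of_dvd_right hg A) N hN
  rwa [mul_sub, mul_one, map_sub, sub_eq_zero] at this

lemma coeff_prod_eq_of_support_subset {g : σ → MvPowerSeries σ R} (hg : ∀ j, X j ∣ g j - 1)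
    {N : σ →₀ ℕ} {s t : Finset σ} (hs : N.support ⊆ s) (hst : s ⊆ t) :
    coeff N (∏ j ∈ t, g j) = coeff N (∏ j ∈ s, g j) := by
  classical
  rw [← prod_sdiff hst, mul_comm]
  refine prod_induction _ (fun h => ∀ A, coeff N (A * h) = coeff N A)
    (fun a b ha hb A => by rw [← mul_assoc, hb, ha]) (fun A => by rw [mul_one])
    (fun j hj A => coeff_mul_eq_of_X_dvd_sub_one (hg j) ?_ A) _
  exact Finsupp.notMem_support_iff.1 fun hN => (mem_sdiff.1 hj).2 (hs hN)

end DvdSubOne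

section InfiniteProducts

variable {σ : Type*}

lemma HasProdPS.unique {ι : Type*} {F : ι → MvPowerSeries σ ℂ} {P P' : MvPowerSeries σ ℂ}
    (h : HasProdPS F P) (h' : HasProdPS F P') : P = P' := by
  classical
  ext N
  obtain ⟨s, hs⟩ := h N
  obtain ⟨s', hs'⟩ := h' N
  rw [← hs (s ∪ s') subset_union_left, hs' (s ∪ s') subset_union_right]

lemma HasProdPS.cpow {ι : Type*} {g : ι → MvPowerSeries σ ℂ} {a : ι → ℂ} {P : MvPowerSeries σ ℂ}
    (h : HasProdPS (fun k => _root_.cpow (g k) (a k)) P) (hg : ∀ k, constantCoeff (g k) = 1)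
    (α : ℂ) : HasProdPS (fun k => _root_.cpow (g k) (α * a k)) (_root_.cpow P α) := by
  classical
  intro N
  choose s hs using h
  refine ⟨(Iic N).biUnion s, fun t ht => ?_⟩
  have hprod : ∏ k ∈ t, _root_.cpow (g k) (α * a k)
      = _root_.cpow (∏ k ∈ t, _root_.cpow (g k) (a k)) α := by
    rw [prod_cpow _ fun k => constantCoeff_cpow _ _]
    exact prod_congr rfl fun k _ => by rw [cpow_cpow (hg k), mul_comm]
  rw [hprod]
  refine CoeffsEqOn.cpow (isLowerSet_Iic N) (fun M hM => ?_) α N Set.self_mem_Iic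
  exact hs M t fun j hj => ht (mem_biUnion.2 ⟨M, mem_Iic.2 hM, hj⟩)

lemma X_dvd_cpow_sub_one {i : σ} {f : MvPowerSeries σ ℂ} (h : X i ∣ f - 1) (α : ℂ) :
    X i ∣ cpow f α - 1 := by
  refine X_dvd_iff.2 fun N hN => ?_
  rw [map_sub, coeff_cpow, sum_eq_single 0 (fun k _ hk => ?_) (by simp), sub_eq_zero]
  · simp [binomC]
  · rw [X_dvd_iff.1 (dvd_pow h hk) N hN, mul_zero]

/-- The infinite product `∏_j (base j)^(c j)`, read off coefficientwise from the factors
`j ∈ N.support`; when `X j ∣ base j - 1` the other factors do not affect the coefficient of `N`. -/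
noncomputable def prodCpow (base : σ → MvPowerSeries σ ℂ) (c : σ → ℂ) : MvPowerSeries σ ℂ :=
  fun N => coeff N (∏ j ∈ N.support, cpow (base j) (c j))

lemma coeff_prodCpow (base : σ → MvPowerSeries σ ℂ) (c : σ → ℂ) (N : σ →₀ ℕ) :
    coeff N (prodCpow base c) = coeff N (∏ j ∈ N.support, cpow (base j) (c j)) :=
  rfl

lemma constantCoeff_prodCpow (base : σ → MvPowerSeries σ ℂ) (c : σ → ℂ) :
    constantCoeff (prodCpow base c) = 1 := by
  rw [← coeff_zero_eq_constantCoeff_apply, coeff_prodCpow]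
  simp

lemma CoeffsEqOn.prodCpow {S : Set (σ →₀ ℕ)} (hS : IsLowerSet S)
    {base base' : σ → MvPowerSeries σ ℂ} (h : ∀ j, CoeffsEqOn S (base j) (base' j)) (c : σ → ℂ) :
    CoeffsEqOn S (_root_.prodCpow base c) (_root_.prodCpow base' c) := fun N hN => by
  rw [coeff_prodCpow, coeff_prodCpow]
  exact CoeffsEqOn.prod hS _ (fun j _ => (h j).cpow hS (c j)) N hN

variable {base : σ → MvPowerSeries σ ℂ}

lemma coeffsEqOn_prodCpow (hbase : ∀ j, X j ∣ base j - 1) (c : σ → ℂ) (N : σ →₀ ℕ) :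
    CoeffsEqOn (Set.Iic N) (prodCpow base c) (∏ j ∈ N.support, cpow (base j) (c j)) :=
  fun _ hM => (coeff_prod_eq_of_support_subset (fun j => X_dvd_cpow_sub_one (hbase j) (c j))
    subset_rfl (Finsupp.support_mono hM)).symm

lemma hasProdPS_prodCpow (hbase : ∀ j, X j ∣ base j - 1) (c : σ → ℂ) :
    HasProdPS (fun j => cpow (base j) (c j)) (prodCpow base c) :=
  fun N => ⟨N.support, fun _ ht =>
    coeff_prod_eq_of_support_subset (fun j => X_dvd_cpow_sub_one (hbase j) (c j)) subset_rfl ht⟩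

lemma prodCpow_ite [DecidableEq σ] (hbase : ∀ j, X j ∣ base j - 1) (i : σ) (β : ℂ) :
    prodCpow base (fun k => if i = k then β else 0) = cpow (base i) β := by
  refine (hasProdPS_prodCpow hbase _).unique fun N => ⟨{i}, fun t ht => ?_⟩
  rw [prod_eq_single_of_mem i (singleton_subset_iff.1 ht) fun j _ hji => ?_, if_pos rfl]
  rw [if_neg (Ne.symm hji), cpow_zero (constantCoeff_eq_one_of_X_dvd_sub_one (hbase j))]

lemma prod_cpow_prod_cpow {ι κ : Type*} (t : Finset ι) (u : Finset κ)
    {g : κ → MvPowerSeries σ ℂ} (hg : ∀ k, constantCoeff (g k) = 1) (A : ι → κ → ℂ)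
    (c : ι → ℂ) :
    ∏ j ∈ t, cpow (∏ k ∈ u, cpow (g k) (A j k)) (c j)
      = ∏ k ∈ u, cpow (g k) (∑ j ∈ t, c j * A j k) := by
  simp_rw [prod_cpow _ (fun k => constantCoeff_cpow _ _), cpow_cpow (hg _), cpow_sum _ (hg _)]
  rw [prod_comm]
  simp_rw [mul_comm]

lemma hasProdPS_cpow_of_eq_prodCpow {ι : Type*} (hbase : ∀ k, X k ∣ base k - 1)
    {A : ι → σ → ℂ} {Q : ι → MvPowerSeries σ ℂ} (hQ : ∀ j, Q j = prodCpow base (A j))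
    {c : ι → ℂ} {b : σ → ℂ}
    (hcA : ∀ k, ({j | c j * A j k ≠ 0} : Set ι).Finite ∧ ∑ᶠ j, c j * A j k = b k) :
    HasProdPS (fun j => cpow (Q j) (c j)) (prodCpow base b) := by
  classical
  intro N
  refine ⟨N.support.biUnion fun k => (hcA k).1.toFinset, fun t ht => ?_⟩
  have hsum : ∀ k ∈ N.support, ∑ j ∈ t, c j * A j k = b k := fun k hk => by
    rw [← (hcA k).2, finsum_eq_sum_of_support_subset _ fun j hj =>
      ht (mem_biUnion.2 ⟨k, hk, (hcA k).1.mem_toFinset.2 hj⟩)]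
  have hbase₁ : ∀ k, constantCoeff (base k) = 1 :=
    fun k => constantCoeff_eq_one_of_X_dvd_sub_one (hbase k)
  calc coeff N (∏ j ∈ t, cpow (Q j) (c j))
      = coeff N (∏ j ∈ t, cpow (∏ k ∈ N.support, cpow (base k) (A j k)) (c j)) := by
        refine CoeffsEqOn.prod (isLowerSet_Iic N) t (fun j _ => ?_) N Set.self_mem_Iic
        rw [hQ j]
        exact (coeffsEqOn_prodCpow hbase (A j) N).cpow (isLowerSet_Iic N) (c j)
    _ = coeff N (∏ k ∈ N.support, cpow (base k) (b k)) := by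
        rw [prod_cpow_prod_cpow _ _ hbase₁, prod_congr rfl fun k hk => by rw [hsum k hk]]
    _ = coeff N (prodCpow base b) := rfl

end InfiniteProducts

section DegreeContracting

variable {ι σ R : Type*} [CommRing R]

lemma isLowerSet_degree_lt (d : ℕ) : IsLowerSet {N : σ →₀ ℕ | N.degree < d} :=
  (isLowerSet_Iio d).preimage Finsupp.degree_mono

lemma CoeffsEqOn.X_mul {d : ℕ} {f g : MvPowerSeries σ R}
    (h : CoeffsEqOn {N | N.degree < d} f g) (i : σ) :
    CoeffsEqOn {N | N.degree < d + 1} (X i * f) (X i * g) := by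
  intro N hN
  rw [X, coeff_monomial_mul, coeff_monomial_mul]
  split_ifs with hi
  · refine congrArg _ (h _ ?_)
    have : (N - Finsupp.single i 1).degree + (Finsupp.single i 1).degree = N.degree := by
      rw [← map_add, tsub_add_cancel_of_le hi]
    rw [Finsupp.degree_single] at this
    change N.degree < d + 1 at hN
    change _ < d
    omega
  · rfl

def DegreeContracting (T : (ι → MvPowerSeries σ R) → ι → MvPowerSeries σ R) : Prop :=
  ∀ d F G, (∀ i, CoeffsEqOn {N | N.degree < d} (F i) (G i)) →
    ∀ i, CoeffsEqOn {N | N.degree < d + 1} (T F i) (T G i)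

namespace DegreeContracting

variable {T : (ι → MvPowerSeries σ R) → ι → MvPowerSeries σ R}

lemma eq_of_isFixedPt (hT : DegreeContracting T) {F G : ι → MvPowerSeries σ R}
    (hF : Function.IsFixedPt T F) (hG : Function.IsFixedPt T G) : F = G := by
  have h : ∀ d i, CoeffsEqOn {N | N.degree < d} (F i) (G i) := by
    intro d
    induction d with
    | zero => exact fun _ _ hN => absurd hN (Nat.not_lt_zero _)
    | succ d ih =>
      have := hT d F G ih
      rwa [hF, hG] at this
  funext i
  ext N
  exact h (N.degree + 1) i N (Nat.lt_succ_self _)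

lemma exists_isFixedPt (hT : DegreeContracting T) : ∃ F, Function.IsFixedPt T F := by
  set x : ℕ → ι → MvPowerSeries σ R := fun n => T^[n] 0
  have hx_succ (n : ℕ) : x (n + 1) = T (x n) := Function.iterate_succ_apply' T n 0
  have hsucc : ∀ n i, CoeffsEqOn {N | N.degree < n} (x n i) (x (n + 1) i) := by
    intro n
    induction n with
    | zero => exact fun _ _ hN => absurd hN (Nat.not_lt_zero _)
    | succ n ih =>
      have := hT n _ _ ih
      rwa [← hx_succ, ← hx_succ] at this
  have hle : ∀ n m, n ≤ m → ∀ i, CoeffsEqOn {N | N.degree < n} (x n i) (x m i) := by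
    intro n m hnm
    induction m, hnm using Nat.le_induction with
    | base => exact fun _ _ _ => rfl
    | succ m hnm ih =>
      exact fun i => (ih i).trans ((hsucc m i).mono fun N hN => lt_of_lt_of_le hN hnm)
  let F : ι → MvPowerSeries σ R := fun i N => coeff N (x (N.degree + 1) i)
  have hF (n : ℕ) (i : ι) : CoeffsEqOn {N | N.degree < n} (F i) (x n i) :=
    fun N hN => hle _ n hN i N (Nat.lt_succ_self _)
  refine ⟨F, funext fun i => ext fun N => ?_⟩
  have hTF := hT _ _ _ (hF (N.degree + 1)) i N (Nat.lt_succ_of_lt (Nat.lt_succ_self _))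
  rw [← hx_succ] at hTF
  exact hTF.trans (hF (N.degree + 2) i N (by simp)).symm

lemma existsUnique_isFixedPt (hT : DegreeContracting T) : ∃! F, Function.IsFixedPt T F :=
  let ⟨F, hF⟩ := hT.exists_isFixedPt
  ⟨F, hF, fun _ hG => hT.eq_of_isFixedPt hG hF⟩

end DegreeContracting

end DegreeContracting

section StandardSystem

variable {H : Type*}

noncomputable def stdMap (G' : H → H → ℂ) (R : H → MvPowerSeries H ℂ) :
    H → MvPowerSeries H ℂ :=
  fun i => 1 - X i * prodCpow R (G' i)

lemma degreeContracting_stdMap (G' : H → H → ℂ) : DegreeContracting (stdMap G') :=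
  fun d _ _ h i => CoeffsEqOn.sub (fun _ _ => rfl)
    ((CoeffsEqOn.prodCpow (isLowerSet_degree_lt d) h (G' i)).X_mul i)

variable {G' : H → H → ℂ} {R : H → MvPowerSeries H ℂ}

lemma infStdSys_iff : InfStdSys G' R ↔ ∀ i, R i + X i * prodCpow R (G' i) = 1 := by
  constructor
  · rintro ⟨-, h⟩ i
    choose P hP hRP using h
    have hR : ∀ j, X j ∣ R j - 1 := fun j => X_dvd_sub_one_of_add_X_mul_eq_one (hRP j)
    rw [← (hP i).unique (hasProdPS_prodCpow hR (G' i))]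
    exact hRP i
  · intro h
    have hR : ∀ j, X j ∣ R j - 1 := fun j => X_dvd_sub_one_of_add_X_mul_eq_one (h j)
    exact ⟨fun i => constantCoeff_eq_one_of_X_dvd_sub_one (hR i),
      fun i => ⟨_, hasProdPS_prodCpow hR (G' i), h i⟩⟩

lemma InfStdSys.X_dvd_sub_one (hR : InfStdSys G' R) (i : H) : X i ∣ R i - 1 :=
  X_dvd_sub_one_of_add_X_mul_eq_one (infStdSys_iff.1 hR i)

lemma existsUnique_infStdSys (G' : H → H → ℂ) : ∃! R, InfStdSys G' R := by
  have h (R : H → MvPowerSeries H ℂ) : InfStdSys G' R ↔ Function.IsFixedPt (stdMap G') R := by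
    rw [infStdSys_iff, Function.IsFixedPt, funext_iff]
    exact forall_congr' fun i => (eq_comm.trans eq_sub_iff_add_eq).symm
  simpa only [h] using (degreeContracting_stdMap G').existsUnique_isFixedPt

end StandardSystem

section InfiniteQSystem

variable {H : Type*} {D Dinv G G' : H → H → ℂ} {Q' : H → MvPowerSeries H ℂ}

lemma hasProdPS_cpow_prodCpow_of_invPair [DecidableEq H] (hD : InvPair D Dinv)
    (hQ' : ∀ j, X j ∣ Q' j - 1) (i : H) :
    HasProdPS (fun j => cpow (prodCpow Q' (Dinv j)) (D i j)) (Q' i) := by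
  have h := hasProdPS_cpow_of_eq_prodCpow hQ' (fun _ => rfl) (hD.1 i)
  rwa [prodCpow_ite hQ', cpow_one (constantCoeff_eq_one_of_X_dvd_sub_one (hQ' i))] at h

lemma infSys_prodCpow [DecidableEq H] (hD : InvPair D Dinv) (hG' : MulDef G Dinv G')
    (hQ' : InfStdSys G' Q') : InfSys D G fun i => prodCpow Q' (Dinv i) :=
  ⟨fun _ => constantCoeff_prodCpow _ _, fun i =>
    ⟨Q' i, prodCpow Q' (G' i), hasProdPS_cpow_prodCpow_of_invPair hD hQ'.X_dvd_sub_one i,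
      hasProdPS_cpow_of_eq_prodCpow hQ'.X_dvd_sub_one (fun _ => rfl) (hG' i),
      infStdSys_iff.1 hQ' i⟩⟩

lemma isCanonicalPS_prodCpow [DecidableEq H] (hD : InvPair D Dinv) (hQ' : ∀ j, X j ∣ Q' j - 1) :
    IsCanonicalPS Dinv D fun i => prodCpow Q' (Dinv i) :=
  fun i => ⟨fun j => cpow (Q' j) (Dinv i j),
    fun j => (hasProdPS_cpow_prodCpow_of_invPair hD hQ' j).cpow
      (fun _ => constantCoeff_prodCpow _ _) (Dinv i j),
    hasProdPS_prodCpow hQ' (Dinv i)⟩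

lemma InfSys.exists_infStdSys_of_isCanonicalPS (hG' : MulDef G Dinv G')
    {Q : H → MvPowerSeries H ℂ} (hQ : InfSys D G Q) (hcan : IsCanonicalPS Dinv D Q) :
    ∃ Q', InfStdSys G' Q' ∧ Q = fun i => prodCpow Q' (Dinv i) := by
  choose P₁ P₂ h₁ h₂ hP using hQ.2
  have hdvd : ∀ i, X i ∣ P₁ i - 1 := fun i => X_dvd_sub_one_of_add_X_mul_eq_one (hP i)
  have hQ_eq : ∀ i, Q i = prodCpow P₁ (Dinv i) := by
    intro i
    obtain ⟨inner, hinner, hQi⟩ := hcan i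
    have : inner = fun j => cpow (P₁ j) (Dinv i j) :=
      funext fun j => (hinner j).unique ((h₁ j).cpow hQ.1 (Dinv i j))
    exact hQi.unique (this ▸ hasProdPS_prodCpow hdvd (Dinv i))
  have hP₂ : ∀ i, P₂ i = prodCpow P₁ (G' i) :=
    fun i => (h₂ i).unique (hasProdPS_cpow_of_eq_prodCpow hdvd hQ_eq (hG' i))
  exact ⟨P₁, infStdSys_iff.2 fun i => hP₂ i ▸ hP i, funext hQ_eq⟩

end InfiniteQSystem

theorem statement11_general {H : Type*} [DecidableEq H]
    (D Dinv G G' : H → H → ℂ)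
    (hD : InvPair D Dinv) (hG' : MulDef G Dinv G') :
    (∃! Q : H → MvPowerSeries H ℂ, InfSys D G Q ∧ IsCanonicalPS Dinv D Q) ∧
    (∀ Q' : H → MvPowerSeries H ℂ, InfStdSys G' Q' →
      ∀ Q : H → MvPowerSeries H ℂ, InfSys D G Q → IsCanonicalPS Dinv D Q →
        ∀ i, HasProdPS (fun j => cpow (Q' j) (Dinv i j)) (Q i)) := by
  obtain ⟨Q', hQ', hQ'_unique⟩ := existsUnique_infStdSys G'
  have hform (Q : H → MvPowerSeries H ℂ) (hQ : InfSys D G Q) (hcan : IsCanonicalPS Dinv D Q)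
      (R : H → MvPowerSeries H ℂ) (hR : InfStdSys G' R) : Q = fun i => prodCpow R (Dinv i) := by
    obtain ⟨P, hP, rfl⟩ := hQ.exists_infStdSys_of_isCanonicalPS hG' hcan
    rw [hQ'_unique P hP, hQ'_unique R hR]
  refine ⟨⟨_, ⟨infSys_prodCpow hD hG' hQ', isCanonicalPS_prodCpow hD hQ'.X_dvd_sub_one⟩,
    fun Q ⟨hQ, hcan⟩ => hform Q hQ hcan Q' hQ'⟩, fun R hR Q hQ hcan i => ?_⟩
  rw [hform Q hQ hcan R hR]
  exact hasProdPS_prodCpow hR.X_dvd_sub_one (Dinv i)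

/-- For infinite matrices `D, G` satisfying conditions (D) and (G'),
the infinite `Q`-system has a unique canonical solution, given by
`Q_i = ∏_j (Q'_j)^{(D⁻¹)_{ij}}` for the unique solution `Q'` of the standard infinite
`Q`-system with matrix `G' = G D⁻¹`. -/
theorem statement11 {H : Type*} [Countable H] [Infinite H] [DecidableEq H]
    (HL : ℕ → Finset H) (hmono : Monotone HL) (hcover : ∀ i : H, ∃ L, i ∈ HL L)
    (D Dinv G G' : H → H → ℂ)
    (hD : InvPair D Dinv) (hG' : MulDef G Dinv G') :
    (∃! Q : H → MvPowerSeries H ℂ, InfSys D G Q ∧ IsCanonicalPS Dinv D Q) ∧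
    (∀ Q' : H → MvPowerSeries H ℂ, InfStdSys G' Q' →
      ∀ Q : H → MvPowerSeries H ℂ, InfSys D G Q → IsCanonicalPS Dinv D Q →
        ∀ i, HasProdPS (fun j => cpow (Q' j) (Dinv i j)) (Q i)) :=
  statement11_general D Dinv G G' hD hG'
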